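/- arXiv:2112.12374 — 2 statements merged into one kernel-verified Lean document; each statement's English description precedes it below -/
import Mathlib

section
/- Let d ≥ 1 and γ ∈ (-1,1). For every f ∈ C_c^∞(ℝ^d × (0,∞)): ∬_{ℝ^d×(0,∞)} ξ^γ ∂_ξ(Δ_γ f) ∂_ξ f dx dξ = -γ ∬_{ℝ^d×(0,∞)} ξ^{γ-2} |∂_ξ f|² dx dξ - ∬_{ℝ^d×(0,∞)} ξ^γ |∂_ξ ∇_{(x,ξ)} f|² dx dξ, where ∇_{(x,ξ)} is the full gradient in all d+1 variables. -/
/-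
Put `g = ∂_ξ f`. Since partial derivatives commute, `∂_ξ Δ_γ f = Δ_γ g - γ ξ⁻² g`. Moreover
`ξ^γ Δ_γ g = div (ξ^γ ∇g)`, so integrating by parts against `g` (no boundary terms, as `g` is
compactly supported away from `ξ = 0`) gives `∫ ξ^γ g Δ_γ g = -∫ ξ^γ |∇g|²`. Finally
`∇g = ∂_ξ ∇f`, again by symmetry of second derivatives.
-/

open MeasureTheory

noncomputable section

/-- The operator `Δ_γ f = Δ_{(x,ξ)} f + (γ/ξ) ∂_ξ f` on functions on `ℝ^d × ℝ`
(relevant on the upper half-space `ξ > 0`). -/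
noncomputable def dgamma (d : ℕ) (γ : ℝ)
    (f : EuclideanSpace ℝ (Fin d) × ℝ → ℝ)
    (p : EuclideanSpace ℝ (Fin d) × ℝ) : ℝ :=
  (∑ i : Fin d,
      fderiv ℝ (fun q => fderiv ℝ f q (EuclideanSpace.single i 1, 0)) p
        (EuclideanSpace.single i 1, 0))
    + fderiv ℝ (fun q => fderiv ℝ f q (0, 1)) p
        ((0 : EuclideanSpace ℝ (Fin d)), (1 : ℝ))
    + γ / p.2 * fderiv ℝ f p ((0 : EuclideanSpace ℝ (Fin d)), (1 : ℝ))

/-- The `d+1` coordinate directions of `ℝ^d × ℝ`. -/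
noncomputable def dir (d : ℕ) (i : Fin (d + 1)) : EuclideanSpace ℝ (Fin d) × ℝ :=
  if h : (i : ℕ) < d then (EuclideanSpace.single (⟨i, h⟩ : Fin d) 1, 0)
  else ((0 : EuclideanSpace ℝ (Fin d)), (1 : ℝ))

/-- The partial derivative `∂_ξ` in the extension variable. -/
noncomputable def dxi (d : ℕ) (f : EuclideanSpace ℝ (Fin d) × ℝ → ℝ)
    (p : EuclideanSpace ℝ (Fin d) × ℝ) : ℝ :=
  fderiv ℝ f p ((0 : EuclideanSpace ℝ (Fin d)), (1 : ℝ))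

section Derivatives

variable {F : Type*} [NormedAddCommGroup F] [NormedSpace ℝ F] {n m : WithTop ℕ∞}

theorem ContDiff.fderiv_right_apply {h : F → ℝ} (hh : ContDiff ℝ n h) (hmn : m + 1 ≤ n)
    (v : F) : ContDiff ℝ m (fderiv ℝ h · v) :=
  (hh.fderiv_right hmn).clm_apply contDiff_const

theorem ContDiff.continuous_fderiv_right_apply {h : F → ℝ} (hh : ContDiff ℝ n h) (hn : n ≠ 0)
    (v : F) : Continuous (fderiv ℝ h · v) :=
  (hh.continuous_fderiv hn).clm_apply continuous_const

theorem fderiv_fderiv_apply_comm {h : F → ℝ} {p : F} (hh : ContDiffAt ℝ 2 h p) (v w : F) :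
    fderiv ℝ (fderiv ℝ h · v) p w = fderiv ℝ (fderiv ℝ h · w) p v := by
  have hd : DifferentiableAt ℝ (fderiv ℝ h) p :=
    (hh.fderiv_right (m := 1) le_rfl).differentiableAt one_ne_zero
  rw [fderiv_clm_apply hd (differentiableAt_const v),
    fderiv_clm_apply hd (differentiableAt_const w)]
  simpa using hh.isSymmSndFDerivAt (by simp) w v

theorem fderiv_fderiv_fderiv_apply_comm {h : F → ℝ} (hh : ContDiff ℝ 3 h) (u v p : F) :
    fderiv ℝ (fderiv ℝ (fderiv ℝ h · v) · v) p u
      = fderiv ℝ (fderiv ℝ (fderiv ℝ h · u) · v) p v := by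
  rw [fderiv_fderiv_apply_comm ((hh.fderiv_right_apply le_rfl v).contDiffAt) v u]
  have hswap :
      (fun q => fderiv ℝ (fderiv ℝ h · v) q u) = (fun q => fderiv ℝ (fderiv ℝ h · u) q v) :=
    funext fun q => fderiv_fderiv_apply_comm (hh.of_le (by norm_num)).contDiffAt v u
  rw [hswap]

end Derivatives

section Weight

open ContinuousLinearMap

variable {F : Type*} [NormedAddCommGroup F] [NormedSpace ℝ F] {u : F × ℝ → ℝ} {β : ℝ}

theorem hasFDerivAt_snd_rpow_mul {u' : F × ℝ →L[ℝ] ℝ} {p : F × ℝ} (hp : p.2 ≠ 0)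
    (hu : HasFDerivAt u u' p) :
    HasFDerivAt (fun q => q.2 ^ β * u q)
      (p.2 ^ β • u' + u p • (β * p.2 ^ (β - 1)) • snd ℝ F ℝ) p :=
  ((Real.hasDerivAt_rpow_const (Or.inl hp)).comp_hasFDerivAt p hasFDerivAt_snd).mul hu

theorem contDiff_snd_rpow_mul {n : WithTop ℕ∞} (hu : ContDiff ℝ n u)
    (hsupp : tsupport u ⊆ {p | p.2 ≠ 0}) : ContDiff ℝ n (fun q => q.2 ^ β * u q) := by
  refine contDiff_iff_contDiffAt.2 fun p => ?_
  by_cases hp : p ∈ tsupport u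
  · exact ((Real.contDiffAt_rpow_const_of_ne (hsupp hp)).comp p contDiffAt_snd).mul
      hu.contDiffAt
  · refine (contDiffAt_const (c := (0 : ℝ))).congr_of_eventuallyEq ?_
    filter_upwards [notMem_tsupport_iff_eventuallyEq.1 hp] with q hq
    simp [hq]

theorem fderiv_snd_rpow_mul_apply (hu : Differentiable ℝ u)
    (hsupp : tsupport u ⊆ {p | p.2 ≠ 0}) (p v : F × ℝ) :
    fderiv ℝ (fun q => q.2 ^ β * u q) p v
      = β * p.2 ^ (β - 1) * v.2 * u p + p.2 ^ β * fderiv ℝ u p v := by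
  by_cases hp : p ∈ tsupport u
  · rw [(hasFDerivAt_snd_rpow_mul (hsupp hp) (hu p).hasFDerivAt).fderiv]
    simp only [add_apply, FunLike.coe_smul, Pi.smul_apply, coe_snd', smul_eq_mul]
    ring
  · have hw : p ∉ tsupport (fun q => q.2 ^ β * u q) := fun h => hp (tsupport_mul_subset_right h)
    simp [fderiv_of_notMem_tsupport ℝ hw, fderiv_of_notMem_tsupport ℝ hp,
      image_eq_zero_of_notMem_tsupport hp]

variable [MeasurableSpace F] [BorelSpace F] {μ : Measure (F × ℝ)}

theorem integrable_snd_rpow_mul_mul [IsFiniteMeasureOnCompacts μ] {w : F × ℝ → ℝ}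
    (hu : Continuous u) (hw : Continuous w) (hus : HasCompactSupport u)
    (hsupp : tsupport u ⊆ {p | p.2 ≠ 0}) : Integrable (fun q => q.2 ^ β * (u q * w q)) μ :=
  (contDiff_snd_rpow_mul (contDiff_zero.2 (hu.mul hw))
      (tsupport_mul_subset_left.trans hsupp)).continuous.integrable_of_hasCompactSupport
    hus.mul_right.mul_left

variable [FiniteDimensional ℝ F] [μ.IsAddHaarMeasure]

theorem integral_snd_rpow_mul_mul_fderiv {w : F × ℝ → ℝ} (hu : ContDiff ℝ 1 u)
    (hw : ContDiff ℝ 1 w) (hus : HasCompactSupport u) (hsupp : tsupport u ⊆ {p | p.2 ≠ 0})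
    (v : F × ℝ) :
    ∫ p, p.2 ^ β * (u p * fderiv ℝ w p v) ∂μ
      = -(β * v.2 * ∫ p, p.2 ^ (β - 1) * (u p * w p) ∂μ)
        - ∫ p, p.2 ^ β * (fderiv ℝ u p v * w p) ∂μ := by
  have hu' := hu.continuous_fderiv_right_apply one_ne_zero v
  have hw' := hw.continuous_fderiv_right_apply one_ne_zero v
  have hus' : HasCompactSupport (fderiv ℝ u · v) := hus.fderiv_apply ℝ v
  have hsupp' := (tsupport_fderiv_apply_subset ℝ v).trans hsupp
  have hIlow := integrable_snd_rpow_mul_mul (μ := μ) (β := β - 1) hu.continuous hw.continuous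
    hus hsupp
  have hIdu := integrable_snd_rpow_mul_mul (μ := μ) (β := β) hu' hw.continuous hus' hsupp'
  have hIw : Integrable (fun p => (p.2 ^ β * u p) * w p) μ := by
    simpa only [mul_assoc] using
      integrable_snd_rpow_mul_mul (μ := μ) (β := β) hu.continuous hw.continuous hus hsupp
  have hIdw : Integrable (fun p => (p.2 ^ β * u p) * fderiv ℝ w p v) μ := by
    simpa only [mul_assoc] using
      integrable_snd_rpow_mul_mul (μ := μ) (β := β) hu.continuous hw' hus hsupp
  have hderiv : (fun p => fderiv ℝ (fun q => q.2 ^ β * u q) p v * w p)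
      = fun p => β * v.2 * (p.2 ^ (β - 1) * (u p * w p)) + p.2 ^ β * (fderiv ℝ u p v * w p) := by
    funext p
    rw [fderiv_snd_rpow_mul_apply (hu.differentiable one_ne_zero) hsupp]
    ring
  have hweight := contDiff_snd_rpow_mul (β := β) hu hsupp
  have hibp := integral_mul_fderiv_eq_neg_fderiv_mul_of_integrable
    (hderiv ▸ (hIlow.const_mul _).add hIdu) hIdw hIw
    (fun p _ => hweight.differentiable one_ne_zero p) (fun p _ => hw.differentiable one_ne_zero p)
  simp only [← mul_assoc] at hibp ⊢
  rw [hibp, hderiv, integral_add (hIlow.const_mul _) hIdu, integral_const_mul]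
  simp only [mul_assoc]
  ring

end Weight

section HalfSpace

variable {d : ℕ}

theorem dir_castSucc (i : Fin d) : dir d i.castSucc = (EuclideanSpace.single i 1, 0) := by
  simp [dir]

theorem dir_last : dir d (Fin.last d) = (0, 1) := by
  simp [dir]

theorem dir_snd (i : Fin (d + 1)) : (dir d i).2 = if i = Fin.last d then 1 else 0 := by
  induction i using Fin.lastCases <;> simp [dir_castSucc, dir_last, Fin.castSucc_ne_last]

theorem dgamma_eq_sum_dir (γ : ℝ) (f : EuclideanSpace ℝ (Fin d) × ℝ → ℝ)
    (p : EuclideanSpace ℝ (Fin d) × ℝ) :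
    dgamma d γ f p
      = ∑ i, fderiv ℝ (fderiv ℝ f · (dir d i)) p (dir d i) + γ / p.2 * dxi d f p := by
  rw [Fin.sum_univ_castSucc]
  simp only [dir_castSucc, dir_last, dgamma, dxi]

theorem dxi_eq_zero_of_notMem_tsupport {h : EuclideanSpace ℝ (Fin d) × ℝ → ℝ}
    {p : EuclideanSpace ℝ (Fin d) × ℝ} (hp : p ∉ tsupport h) : dxi d h p = 0 := by
  simp [dxi, fderiv_of_notMem_tsupport ℝ hp]

theorem dxi_fderiv_apply {f : EuclideanSpace ℝ (Fin d) × ℝ → ℝ} (hf : ContDiff ℝ 2 f)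
    (v p : EuclideanSpace ℝ (Fin d) × ℝ) : dxi d (fderiv ℝ f · v) p = fderiv ℝ (dxi d f) p v :=
  fderiv_fderiv_apply_comm hf.contDiffAt _ _

open ContinuousLinearMap in
theorem dxi_dgamma (γ : ℝ) {f : EuclideanSpace ℝ (Fin d) × ℝ → ℝ} (hf : ContDiff ℝ 3 f)
    {p : EuclideanSpace ℝ (Fin d) × ℝ} (hp : p.2 ≠ 0) :
    dxi d (dgamma d γ f) p = dgamma d γ (dxi d f) p - γ / p.2 ^ 2 * dxi d f p := by
  have hg : ContDiff ℝ 2 (dxi d f) := hf.fderiv_right_apply (by norm_num) _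
  have hL : ∀ i, HasFDerivAt (fun q => fderiv ℝ (fderiv ℝ f · (dir d i)) q (dir d i))
      (fderiv ℝ (fun q => fderiv ℝ (fderiv ℝ f · (dir d i)) q (dir d i)) p) p := fun i =>
    (((hf.fderiv_right_apply (m := 2) (by norm_num) _).fderiv_right_apply (m := 1)
      (by norm_num) _).differentiable one_ne_zero p).hasFDerivAt
  have hcoef : HasFDerivAt (fun q : EuclideanSpace ℝ (Fin d) × ℝ => γ * q.2⁻¹)
      ((γ * -(p.2 ^ 2)⁻¹) • snd ℝ _ ℝ) p :=
    ((hasDerivAt_inv hp).const_mul γ).comp_hasFDerivAt p hasFDerivAt_snd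
  have hsum := ((HasFDerivAt.fun_sum (u := Finset.univ) fun i _ => hL i).add
    (hcoef.mul ((hg.differentiable two_ne_zero p).hasFDerivAt))).congr_of_eventuallyEq
    (f₁ := dgamma d γ f)
    (Filter.Eventually.of_forall fun q => by
      simp only [dgamma_eq_sum_dir, div_eq_mul_inv, Pi.add_apply, Pi.mul_apply])
  rw [dxi, hsum.fderiv, dgamma_eq_sum_dir]
  simp only [add_apply, sum_apply, FunLike.coe_smul, Pi.smul_apply, coe_snd', smul_eq_mul]
  rw [Finset.sum_congr rfl fun i _ => fderiv_fderiv_fderiv_apply_comm hf (0, 1) (dir d i) p]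
  unfold dxi
  field_simp
  ring

-- `volume` on a product type is `volume.prod volume` only up to unfolding, so the product
-- instance is not found by itself.
instance : (volume : Measure (EuclideanSpace ℝ (Fin d) × ℝ)).IsAddHaarMeasure :=
  Measure.prod.instIsAddHaarMeasure _ _

theorem snd_rpow_mul_dxi_dgamma_mul_dxi_eq (γ : ℝ) {f : EuclideanSpace ℝ (Fin d) × ℝ → ℝ}
    (hf : ContDiff ℝ 3 f) (hfhs : tsupport f ⊆ {p | 0 < p.2}) (p : EuclideanSpace ℝ (Fin d) × ℝ) :
    p.2 ^ γ * dxi d (dgamma d γ f) p * dxi d f p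
      = p.2 ^ γ * (dxi d f p * dgamma d γ (dxi d f) p)
        - γ * (p.2 ^ (γ - 2) * (dxi d f p * dxi d f p)) := by
  by_cases hp : p ∈ tsupport f
  · rw [dxi_dgamma γ hf (hfhs hp).ne', Real.rpow_sub (hfhs hp), Real.rpow_two]
    ring
  · simp [dxi_eq_zero_of_notMem_tsupport hp]

theorem snd_rpow_mul_mul_dgamma_eq (γ : ℝ) {g : EuclideanSpace ℝ (Fin d) × ℝ → ℝ}
    (hsupp : tsupport g ⊆ {p | p.2 ≠ 0}) (p : EuclideanSpace ℝ (Fin d) × ℝ) :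
    p.2 ^ γ * (g p * dgamma d γ g p)
      = ∑ i, p.2 ^ γ * (g p * fderiv ℝ (fderiv ℝ g · (dir d i)) p (dir d i))
        + γ * (p.2 ^ (γ - 1) * (g p * fderiv ℝ g p (dir d (Fin.last d)))) := by
  by_cases hp : p ∈ tsupport g
  · rw [dgamma_eq_sum_dir, Real.rpow_sub_one (hsupp hp), dir_last, dxi, mul_add, mul_add,
      Finset.mul_sum, Finset.mul_sum]
    ring
  · simp [image_eq_zero_of_notMem_tsupport hp]

theorem continuous_dgamma (γ : ℝ) {g : EuclideanSpace ℝ (Fin d) × ℝ → ℝ} (hg : ContDiff ℝ 2 g)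
    (hsupp : tsupport g ⊆ {p | p.2 ≠ 0}) : Continuous (dgamma d γ g) := by
  have hcoef : Continuous fun q : EuclideanSpace ℝ (Fin d) × ℝ => q.2 ^ (-1 : ℝ) * dxi d g q :=
    (contDiff_snd_rpow_mul (hg.fderiv_right_apply (m := 1) (by norm_num) _)
      ((tsupport_fderiv_apply_subset ℝ _).trans hsupp)).continuous
  have hfun : dgamma d γ g = fun q => ∑ i, fderiv ℝ (fderiv ℝ g · (dir d i)) q (dir d i)
      + γ * (q.2 ^ (-1 : ℝ) * dxi d g q) := by
    funext q
    rw [dgamma_eq_sum_dir, Real.rpow_neg_one, div_eq_mul_inv, mul_assoc]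
  rw [hfun]
  exact (continuous_finsetSum _ fun i _ => ((hg.fderiv_right_apply (m := 1) (by norm_num)
    _).continuous_fderiv_right_apply one_ne_zero _)).add (hcoef.const_mul γ)

theorem integral_snd_rpow_mul_mul_dgamma (γ : ℝ) {g : EuclideanSpace ℝ (Fin d) × ℝ → ℝ}
    (hg : ContDiff ℝ 2 g) (hgs : HasCompactSupport g) (hsupp : tsupport g ⊆ {p | p.2 ≠ 0}) :
    ∫ p, p.2 ^ γ * (g p * dgamma d γ g p)
      = -∫ p, p.2 ^ γ * ∑ i, (fderiv ℝ g p (dir d i)) ^ 2 := by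
  have hD : ∀ v, ContDiff ℝ 1 (fderiv ℝ g · v) := hg.fderiv_right_apply (by norm_num)
  have hA : ∀ i ∈ Finset.univ, Integrable (fun p : EuclideanSpace ℝ (Fin d) × ℝ =>
      p.2 ^ γ * (g p * fderiv ℝ (fderiv ℝ g · (dir d i)) p (dir d i))) := fun i _ =>
    integrable_snd_rpow_mul_mul hg.continuous
      ((hD _).continuous_fderiv_right_apply one_ne_zero _) hgs hsupp
  have hB : Integrable (fun p : EuclideanSpace ℝ (Fin d) × ℝ =>
      p.2 ^ (γ - 1) * (g p * fderiv ℝ g p (dir d (Fin.last d)))) :=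
    integrable_snd_rpow_mul_mul hg.continuous (hg.continuous_fderiv_right_apply two_ne_zero _)
      hgs hsupp
  have hC : ∀ i ∈ Finset.univ, Integrable (fun p : EuclideanSpace ℝ (Fin d) × ℝ =>
      p.2 ^ γ * (fderiv ℝ g p (dir d i) * fderiv ℝ g p (dir d i))) := fun i _ =>
    integrable_snd_rpow_mul_mul (hD _).continuous (hD _).continuous (hgs.fderiv_apply ℝ _)
      ((tsupport_fderiv_apply_subset ℝ _).trans hsupp)
  have hibp : ∀ i, ∫ p, p.2 ^ γ * (g p * fderiv ℝ (fderiv ℝ g · (dir d i)) p (dir d i))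
      = -(γ * (dir d i).2 * ∫ p, p.2 ^ (γ - 1) * (g p * fderiv ℝ g p (dir d i)))
        - ∫ p, p.2 ^ γ * (fderiv ℝ g p (dir d i) * fderiv ℝ g p (dir d i)) := fun i =>
    integral_snd_rpow_mul_mul_fderiv (hg.of_le (by norm_num)) (hD _) hgs hsupp _
  simp only [snd_rpow_mul_mul_dgamma_eq γ hsupp, Finset.mul_sum, sq]
  rw [integral_add (integrable_finsetSum _ hA) (hB.const_mul γ), integral_finsetSum _ hA,
    integral_const_mul, integral_finsetSum _ hC]
  -- only the `ξ`-direction differentiates the weight, and that term cancels the first-order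
  -- part of `Δ_γ`
  simp only [hibp, dir_snd, mul_ite, mul_one, mul_zero, ite_mul, zero_mul, Finset.sum_sub_distrib,
    Finset.sum_neg_distrib, Finset.sum_ite_eq', Finset.mem_univ, ↓reduceIte]
  ring

end HalfSpace

theorem stmt_9_general (d : ℕ) (γ : ℝ)
    (f : EuclideanSpace ℝ (Fin d) × ℝ → ℝ)
    (hf : ContDiff ℝ (⊤ : ℕ∞) f) (hfs : HasCompactSupport f)
    (hfhs : tsupport f ⊆ {p : EuclideanSpace ℝ (Fin d) × ℝ | 0 < p.2}) :
    ∫ p in {p : EuclideanSpace ℝ (Fin d) × ℝ | 0 < p.2},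
        p.2 ^ γ * dxi d (dgamma d γ f) p * dxi d f p
      = -γ * (∫ p in {p : EuclideanSpace ℝ (Fin d) × ℝ | 0 < p.2},
            p.2 ^ (γ - 2) * (dxi d f p) ^ 2)
        - ∫ p in {p : EuclideanSpace ℝ (Fin d) × ℝ | 0 < p.2},
            p.2 ^ γ * ∑ i : Fin (d + 1),
              (dxi d (fun q => fderiv ℝ f q (dir d i)) p) ^ 2 := by
  have hoff : ∀ p ∉ {p : EuclideanSpace ℝ (Fin d) × ℝ | 0 < p.2}, p ∉ tsupport f :=
    fun p hp h => hp (hfhs h)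
  rw [setIntegral_eq_integral_of_forall_compl_eq_zero fun p hp => by
      simp [dxi_eq_zero_of_notMem_tsupport (hoff p hp)],
    setIntegral_eq_integral_of_forall_compl_eq_zero fun p hp => by
      simp [dxi_eq_zero_of_notMem_tsupport (hoff p hp)],
    setIntegral_eq_integral_of_forall_compl_eq_zero fun p hp => by
      simp [dxi_eq_zero_of_notMem_tsupport
        fun h => hoff p hp (tsupport_fderiv_apply_subset ℝ _ h)]]
  have hf3 : ContDiff ℝ 3 f := hf.of_le (by norm_cast)
  simp only [snd_rpow_mul_dxi_dgamma_mul_dxi_eq γ hf3 hfhs,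
    dxi_fderiv_apply (hf3.of_le (by norm_num)), sq]
  set g := dxi d f
  have hg : ContDiff ℝ 2 g := hf3.fderiv_right_apply (by norm_num) _
  have hgs : HasCompactSupport g := hfs.fderiv_apply ℝ _
  have hgsupp : tsupport g ⊆ {p | p.2 ≠ 0} :=
    ((tsupport_fderiv_apply_subset ℝ _).trans hfhs).trans fun p hp => hp.ne'
  have hIg := integrable_snd_rpow_mul_mul (μ := volume) (β := γ - 2) hg.continuous hg.continuous
    hgs hgsupp
  rw [integral_sub (integrable_snd_rpow_mul_mul hg.continuous (continuous_dgamma γ hg hgsupp)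
      hgs hgsupp) (hIg.const_mul γ),
    integral_const_mul, integral_snd_rpow_mul_mul_dgamma γ hg hgs hgsupp]
  simp only [sq]
  ring

/-- For `γ ∈ (-1,1)` and `f ∈ C_c^∞(ℝ^d × (0,∞))`,
`∬ ξ^γ ∂_ξ(Δ_γ f) ∂_ξ f = -γ ∬ ξ^{γ-2} |∂_ξ f|² - ∬ ξ^γ |∂_ξ ∇_{(x,ξ)} f|²`. -/
theorem stmt_9 (d : ℕ) (hd : 1 ≤ d) (γ : ℝ) (hγ₁ : -1 < γ) (hγ₂ : γ < 1)
    (f : EuclideanSpace ℝ (Fin d) × ℝ → ℝ)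
    (hf : ContDiff ℝ (⊤ : ℕ∞) f) (hfs : HasCompactSupport f)
    (hfhs : tsupport f ⊆ {p : EuclideanSpace ℝ (Fin d) × ℝ | 0 < p.2}) :
    ∫ p in {p : EuclideanSpace ℝ (Fin d) × ℝ | 0 < p.2},
        p.2 ^ γ * dxi d (dgamma d γ f) p * dxi d f p
      = -γ * (∫ p in {p : EuclideanSpace ℝ (Fin d) × ℝ | 0 < p.2},
            p.2 ^ (γ - 2) * (dxi d f p) ^ 2)
        - ∫ p in {p : EuclideanSpace ℝ (Fin d) × ℝ | 0 < p.2},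
            p.2 ^ γ * ∑ i : Fin (d + 1),
              (dxi d (fun q => fderiv ℝ f q (dir d i)) p) ^ 2 :=
  stmt_9_general d γ f hf hfs hfhs
end
end

section
/- Let d ≥ 1, γ ∈ ℝ, and m ∈ ℕ. For every v ∈ C^∞(ℝ^d;ℝ^d) and every f ∈ C^∞(ℝ^d × (0,∞)), the following identity holds pointwise on ℝ^d × (0,∞): Δ_γ^m ( v·∇_x f ) = ∑_{ℓ₁+ℓ₂+p=m} (m!/(ℓ₁! ℓ₂! p!)) 2^p ∑_{j₁,…,j_p=1}^d ( Δ_x^{ℓ₁} ∂_{x_{j₁}}⋯∂_{x_{j_p}} v ) · ∇_x ( ∂_{x_{j₁}}⋯∂_{x_{j_p}} Δ_γ^{ℓ₂} f ), where the outer sum runs over all triples of nonnegative integers (ℓ₁,ℓ₂,p) with ℓ₁+ℓ₂+p = m, Δ_x is the Laplacian in the x-variables, ∇_x is the gradient in the x-variables, and · is the inner product of ℝ^d (for p = 0 the inner sum is the single term (Δ_x^{ℓ₁} v)·∇_x(Δ_γ^{ℓ₂} f)). -/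
open MeasureTheory

noncomputable section

/-- The partial derivative `∂_{x_i}` of a function on `ℝ^d × ℝ`. -/
noncomputable def dX (d : ℕ) (i : Fin d) (g : EuclideanSpace ℝ (Fin d) × ℝ → ℝ)
    (p : EuclideanSpace ℝ (Fin d) × ℝ) : ℝ :=
  fderiv ℝ g p (EuclideanSpace.single i 1, 0)

/-- Iterated `x`-partial derivatives `∂_{x_{j₁}} ⋯ ∂_{x_{j_p}} g` of a function on
`ℝ^d × ℝ` along a tuple of coordinate indices. -/
noncomputable def dXIter (d : ℕ) {p : ℕ} (js : Fin p → Fin d)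
    (g : EuclideanSpace ℝ (Fin d) × ℝ → ℝ) : EuclideanSpace ℝ (Fin d) × ℝ → ℝ :=
  (List.ofFn js).foldr (fun i h => dX d i h) g

/-- The partial derivative `∂_{x_i}` of a vector field `v : ℝ^d → ℝ^d`. -/
noncomputable def dXv (d : ℕ) (i : Fin d)
    (v : EuclideanSpace ℝ (Fin d) → EuclideanSpace ℝ (Fin d)) :
    EuclideanSpace ℝ (Fin d) → EuclideanSpace ℝ (Fin d) :=
  fun x => fderiv ℝ v x (EuclideanSpace.single i 1)

/-- Iterated `x`-partial derivatives of a vector field along a tuple of indices. -/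
noncomputable def dXvIter (d : ℕ) {p : ℕ} (js : Fin p → Fin d)
    (v : EuclideanSpace ℝ (Fin d) → EuclideanSpace ℝ (Fin d)) :
    EuclideanSpace ℝ (Fin d) → EuclideanSpace ℝ (Fin d) :=
  (List.ofFn js).foldr (fun i w => dXv d i w) v

/-- The componentwise Laplacian `Δ_x v` of a vector field, as an operator on vector
fields (so that `Δ_x^{ℓ}` makes sense as an iterate). -/
noncomputable def vecLapX (d : ℕ)
    (v : EuclideanSpace ℝ (Fin d) → EuclideanSpace ℝ (Fin d)) :
    EuclideanSpace ℝ (Fin d) → EuclideanSpace ℝ (Fin d) :=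
  fun x => ∑ i : Fin d, dXv d i (dXv d i v) x


/-!
Write `T(r, a, b) = ∑_{j₁,…,j_r} (Δ_x^a ∂_{j₁}⋯∂_{j_r} v) · ∇_x (∂_{j₁}⋯∂_{j_r} Δ_γ^b f)`.
The coefficient `γ / ξ` of `Δ_γ` does not depend on `x`, so `Δ_γ` commutes with every `∂_{x_j}`;
the factor `v` does not depend on `ξ`, so the Leibniz rule
`Δ_γ (α G) = (Δ_γ α) G + 2 ∇α · ∇G + α Δ_γ G` gives
`Δ_γ T(r, a, b) = T(r, a + 1, b) + T(r, a, b + 1) + 2 T(r + 1, a, b)`.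
Encoding `T(r, a, b)` by the monomial `X₀^r X₁^a X₂^b`, the operator `Δ_γ` therefore acts as
multiplication by `X₁ + X₂ + 2 X₀`, and the formula is the trinomial expansion of
`(X₁ + X₂ + 2 X₀)^m`.
-/

open Set
open scoped ContDiff

section DirDeriv

variable {X Y Z : Type*} [NormedAddCommGroup X] [NormedSpace ℝ X]
  [NormedAddCommGroup Y] [NormedSpace ℝ Y] [NormedAddCommGroup Z] [NormedSpace ℝ Z]

def dirDeriv (w : X) (g : X → Y) : X → Y := fun x => fderiv ℝ g x w

variable {s : Set X} {g h : X → Y} {u w : X} {x : X}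

theorem contDiffOn_dirDeriv (hg : ContDiffOn ℝ ∞ g s) (hs : IsOpen s) :
    ContDiffOn ℝ ∞ (dirDeriv w g) s :=
  (hg.fderiv_of_isOpen hs le_rfl).clm_apply contDiffOn_const

theorem contDiff_dirDeriv (hg : ContDiff ℝ ∞ g) : ContDiff ℝ ∞ (dirDeriv w g) :=
  contDiffOn_univ.mp (contDiffOn_dirDeriv hg.contDiffOn isOpen_univ)

theorem ContDiffOn.differentiableAt_of_isOpen (hg : ContDiffOn ℝ ∞ g s) (hs : IsOpen s)
    (hx : x ∈ s) : DifferentiableAt ℝ g x :=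
  (hg.contDiffAt (hs.mem_nhds hx)).differentiableAt (by simp)

theorem eqOn_dirDeriv (hgh : EqOn g h s) (hs : IsOpen s) :
    EqOn (dirDeriv w g) (dirDeriv w h) s := fun _ hx => by
  simp only [dirDeriv, (hgh.eventuallyEq_of_mem (hs.mem_nhds hx)).fderiv_eq]

theorem dirDeriv_comm (hg : ContDiffOn ℝ ∞ g s) (hs : IsOpen s) (hx : x ∈ s) :
    dirDeriv u (dirDeriv w g) x = dirDeriv w (dirDeriv u g) x := by
  have hg' : DifferentiableAt ℝ (fderiv ℝ g) x :=
    (hg.fderiv_of_isOpen hs le_rfl).differentiableAt_of_isOpen hs hx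
  have hsymm : IsSymmSndFDerivAt ℝ g x :=
    (hg.contDiffAt (hs.mem_nhds hx)).isSymmSndFDerivAt
      (by rw [minSmoothness_of_isRCLikeNormedField]; exact WithTop.coe_le_coe.mpr le_top)
  have hsnd : ∀ v v', dirDeriv v (dirDeriv v' g) x = fderiv ℝ (fderiv ℝ g) x v v' :=
    fun v v' => by
      change fderiv ℝ (fun y => fderiv ℝ g y v') x v = _
      simp [fderiv_clm_apply hg' (differentiableAt_const v')]
  rw [hsnd, hsnd]
  exact hsymm u w

theorem dirDeriv_comm_dirDeriv_dirDeriv (hg : ContDiffOn ℝ ∞ g s) (hs : IsOpen s)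
    (hx : x ∈ s) :
    dirDeriv u (dirDeriv w (dirDeriv w g)) x = dirDeriv w (dirDeriv w (dirDeriv u g)) x := by
  rw [dirDeriv_comm (contDiffOn_dirDeriv hg hs) hs hx]
  exact eqOn_dirDeriv (fun y hy => dirDeriv_comm hg hs hy) hs hx

theorem dirDeriv_zero_left (g : X → Y) : dirDeriv 0 g = 0 := by
  ext x
  simp [dirDeriv]

theorem dirDeriv_const (c : Y) : dirDeriv w (fun _ : X => c) = fun _ => 0 := by
  ext x
  simp [dirDeriv]

theorem dirDeriv_add (hg : DifferentiableAt ℝ g x) (hh : DifferentiableAt ℝ h x) :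
    dirDeriv w (fun y => g y + h y) x = dirDeriv w g x + dirDeriv w h x := by
  simp [dirDeriv, fderiv_fun_add hg hh]

theorem dirDeriv_const_smul (c : ℝ) (hg : DifferentiableAt ℝ g x) :
    dirDeriv w (fun y => c • g y) x = c • dirDeriv w g x := by
  simp [dirDeriv, fderiv_fun_const_smul hg]

theorem dirDeriv_sum {ι : Type*} {t : Finset ι} {F : ι → X → Y}
    (hF : ∀ i ∈ t, DifferentiableAt ℝ (F i) x) :
    dirDeriv w (fun y => ∑ i ∈ t, F i y) x = ∑ i ∈ t, dirDeriv w (F i) x := by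
  simp [dirDeriv, fderiv_fun_sum hF]

theorem dirDeriv_mul {a b : X → ℝ} (ha : DifferentiableAt ℝ a x)
    (hb : DifferentiableAt ℝ b x) :
    dirDeriv w (fun y => a y * b y) x = dirDeriv w a x * b x + a x * dirDeriv w b x := by
  simp [dirDeriv, fderiv_fun_mul ha hb]
  ring

theorem dirDeriv_clm_comp (ℓ : Y →L[ℝ] Z) (hg : DifferentiableAt ℝ g x) :
    dirDeriv w (fun y => ℓ (g y)) x = ℓ (dirDeriv w g x) := by
  simp [dirDeriv, fderiv_fun_comp x ℓ.differentiableAt hg]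

theorem dirDeriv_comp_fst {b : X → Y} {p w : X × Z} (hb : DifferentiableAt ℝ b p.1) :
    dirDeriv w (fun q : X × Z => b q.1) p = dirDeriv w.1 b p.1 := by
  simp [dirDeriv, fderiv_fun_comp p hb differentiableAt_fst, fderiv_fst]

theorem dirDeriv_comp_snd {b : Z → Y} {p w : X × Z} (hb : DifferentiableAt ℝ b p.2) :
    dirDeriv w (fun q : X × Z => b q.2) p = dirDeriv w.2 b p.2 := by
  simp [dirDeriv, fderiv_fun_comp p hb differentiableAt_snd, fderiv_snd]

section SecondOrder

variable (hs : IsOpen s) (hx : x ∈ s)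
include hs hx

theorem dirDeriv_dirDeriv_add (hg : ContDiffOn ℝ ∞ g s) (hh : ContDiffOn ℝ ∞ h s) :
    dirDeriv u (dirDeriv w (fun y => g y + h y)) x
      = dirDeriv u (dirDeriv w g) x + dirDeriv u (dirDeriv w h) x := by
  rw [eqOn_dirDeriv (fun y hy => dirDeriv_add (hg.differentiableAt_of_isOpen hs hy)
      (hh.differentiableAt_of_isOpen hs hy)) hs hx,
    dirDeriv_add ((contDiffOn_dirDeriv hg hs).differentiableAt_of_isOpen hs hx)
      ((contDiffOn_dirDeriv hh hs).differentiableAt_of_isOpen hs hx)]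

theorem dirDeriv_dirDeriv_const_smul (c : ℝ) (hg : ContDiffOn ℝ ∞ g s) :
    dirDeriv u (dirDeriv w (fun y => c • g y)) x = c • dirDeriv u (dirDeriv w g) x := by
  rw [eqOn_dirDeriv (fun y hy => dirDeriv_const_smul c (hg.differentiableAt_of_isOpen hs hy))
      hs hx,
    dirDeriv_const_smul c ((contDiffOn_dirDeriv hg hs).differentiableAt_of_isOpen hs hx)]

theorem dirDeriv_dirDeriv_mul {a b : X → ℝ} (ha : ContDiffOn ℝ ∞ a s)
    (hb : ContDiffOn ℝ ∞ b s) :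
    dirDeriv w (dirDeriv w (fun y => a y * b y)) x
      = dirDeriv w (dirDeriv w a) x * b x + 2 * (dirDeriv w a x * dirDeriv w b x)
        + a x * dirDeriv w (dirDeriv w b) x := by
  have hD : ∀ {c : X → ℝ}, ContDiffOn ℝ ∞ c s → ∀ y ∈ s, DifferentiableAt ℝ c y :=
    fun hc _ hy => hc.differentiableAt_of_isOpen hs hy
  have ha' := contDiffOn_dirDeriv (w := w) ha hs
  have hb' := contDiffOn_dirDeriv (w := w) hb hs
  rw [eqOn_dirDeriv (fun y hy => dirDeriv_mul (hD ha y hy) (hD hb y hy)) hs hx,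
    dirDeriv_add ((hD ha' x hx).fun_mul (hD hb x hx)) ((hD ha x hx).fun_mul (hD hb' x hx)),
    dirDeriv_mul (hD ha' x hx) (hD hb x hx), dirDeriv_mul (hD ha x hx) (hD hb' x hx)]
  ring

end SecondOrder

end DirDeriv

section HalfSpace

variable {d : ℕ} {γ : ℝ}

def upperHalfSpace (d : ℕ) : Set (EuclideanSpace ℝ (Fin d) × ℝ) := {p | 0 < p.2}

theorem isOpen_upperHalfSpace : IsOpen (upperHalfSpace d) :=
  isOpen_lt continuous_const continuous_snd

def xDir (i : Fin d) : EuclideanSpace ℝ (Fin d) × ℝ := (EuclideanSpace.single i 1, 0)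

def ξDir (d : ℕ) : EuclideanSpace ℝ (Fin d) × ℝ := (0, 1)

@[simp] theorem xDir_fst (i : Fin d) : (xDir i).1 = EuclideanSpace.single i 1 := rfl

@[simp] theorem xDir_snd (i : Fin d) : (xDir i).2 = 0 := rfl

@[simp] theorem ξDir_fst : (ξDir d).1 = 0 := rfl

theorem dX_eq_dirDeriv (i : Fin d) : dX d i = dirDeriv (xDir i) := rfl

theorem dXv_eq_dirDeriv (i : Fin d) : dXv d i = dirDeriv (EuclideanSpace.single i 1) := rfl

theorem dgamma_apply (g : EuclideanSpace ℝ (Fin d) × ℝ → ℝ) (p : EuclideanSpace ℝ (Fin d) × ℝ) :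
    dgamma d γ g p = ∑ i, dirDeriv (xDir i) (dirDeriv (xDir i) g) p
      + dirDeriv (ξDir d) (dirDeriv (ξDir d) g) p + γ / p.2 * dirDeriv (ξDir d) g p := rfl

variable {g h : EuclideanSpace ℝ (Fin d) × ℝ → ℝ} {q : EuclideanSpace ℝ (Fin d) × ℝ}

theorem contDiffOn_dX (hg : ContDiffOn ℝ ∞ g (upperHalfSpace d)) (i : Fin d) :
    ContDiffOn ℝ ∞ (dX d i g) (upperHalfSpace d) :=
  contDiffOn_dirDeriv hg isOpen_upperHalfSpace

theorem contDiffOn_dgamma (hg : ContDiffOn ℝ ∞ g (upperHalfSpace d)) :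
    ContDiffOn ℝ ∞ (dgamma d γ g) (upperHalfSpace d) := by
  have hD : ∀ w, ContDiffOn ℝ ∞ (dirDeriv w g) (upperHalfSpace d) :=
    fun w => contDiffOn_dirDeriv hg isOpen_upperHalfSpace
  have hDD : ∀ w w', ContDiffOn ℝ ∞ (dirDeriv w (dirDeriv w' g)) (upperHalfSpace d) :=
    fun w w' => contDiffOn_dirDeriv (hD w') isOpen_upperHalfSpace
  have hγ : ContDiffOn ℝ ∞ (fun p : EuclideanSpace ℝ (Fin d) × ℝ => γ / p.2)
      (upperHalfSpace d) :=
    contDiffOn_const.div contDiff_snd.contDiffOn fun _ hp => hp.ne'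
  exact ((ContDiffOn.sum fun i _ => hDD _ _).add (hDD _ _)).add (hγ.mul (hD _))

theorem contDiffOn_iterate_dgamma (hg : ContDiffOn ℝ ∞ g (upperHalfSpace d)) (n : ℕ) :
    ContDiffOn ℝ ∞ ((dgamma d γ)^[n] g) (upperHalfSpace d) := by
  induction n with
  | zero => exact hg
  | succ n ih => rw [Function.iterate_succ_apply']; exact contDiffOn_dgamma ih

theorem eqOn_dgamma (hgh : EqOn g h (upperHalfSpace d)) :
    EqOn (dgamma d γ g) (dgamma d γ h) (upperHalfSpace d) := by
  intro q hq
  have h1 : ∀ w, EqOn (dirDeriv w g) (dirDeriv w h) (upperHalfSpace d) :=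
    fun w => eqOn_dirDeriv hgh isOpen_upperHalfSpace
  have h2 : ∀ w w',
      EqOn (dirDeriv w (dirDeriv w' g)) (dirDeriv w (dirDeriv w' h)) (upperHalfSpace d) :=
    fun w w' => eqOn_dirDeriv (h1 w') isOpen_upperHalfSpace
  simp only [dgamma_apply, h1 _ hq, h2 _ _ hq]

section Linearity

variable (hg : ContDiffOn ℝ ∞ g (upperHalfSpace d)) (hq : q ∈ upperHalfSpace d)
include hg hq

theorem dgamma_add (hh : ContDiffOn ℝ ∞ h (upperHalfSpace d)) :
    dgamma d γ (fun p => g p + h p) q = dgamma d γ g q + dgamma d γ h q := by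
  have hD := dirDeriv_add (w := ξDir d) (hg.differentiableAt_of_isOpen isOpen_upperHalfSpace hq)
    (hh.differentiableAt_of_isOpen isOpen_upperHalfSpace hq)
  simp only [dgamma_apply, dirDeriv_dirDeriv_add isOpen_upperHalfSpace hq hg hh, hD,
    Finset.sum_add_distrib]
  ring

theorem dgamma_const_smul (c : ℝ) : dgamma d γ (c • g) q = c * dgamma d γ g q := by
  have hD := dirDeriv_const_smul (w := ξDir d) c
    (hg.differentiableAt_of_isOpen isOpen_upperHalfSpace hq)
  simp only [dgamma_apply, Pi.smul_def,
    dirDeriv_dirDeriv_const_smul isOpen_upperHalfSpace hq c hg, hD]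
  simp only [smul_eq_mul, ← Finset.mul_sum]
  ring

theorem dgamma_mul {a : EuclideanSpace ℝ (Fin d) × ℝ → ℝ}
    (ha : ContDiffOn ℝ ∞ a (upperHalfSpace d)) :
    dgamma d γ (fun p => a p * g p) q
      = dgamma d γ a q * g q
        + 2 * (∑ i, dX d i a q * dX d i g q + dirDeriv (ξDir d) a q * dirDeriv (ξDir d) g q)
        + a q * dgamma d γ g q := by
  have hD := dirDeriv_mul (w := ξDir d) (ha.differentiableAt_of_isOpen isOpen_upperHalfSpace hq)
    (hg.differentiableAt_of_isOpen isOpen_upperHalfSpace hq)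
  simp only [dgamma_apply, dX_eq_dirDeriv, dirDeriv_dirDeriv_mul isOpen_upperHalfSpace hq ha hg,
    hD, Finset.sum_add_distrib, ← Finset.sum_mul, ← Finset.mul_sum]
  ring

end Linearity

theorem dgamma_sum {ι : Type*} {t : Finset ι} {F : ι → EuclideanSpace ℝ (Fin d) × ℝ → ℝ}
    (hF : ∀ i ∈ t, ContDiffOn ℝ ∞ (F i) (upperHalfSpace d)) (hq : q ∈ upperHalfSpace d) :
    dgamma d γ (fun p => ∑ i ∈ t, F i p) q = ∑ i ∈ t, dgamma d γ (F i) q := by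
  classical
  induction t using Finset.induction_on with
  | empty => simp [dgamma_apply, dirDeriv_const]
  | insert i t hi ih =>
    simp only [Finset.sum_insert hi]
    rw [dgamma_add (hF i (Finset.mem_insert_self i t)) hq
      (ContDiffOn.sum fun j hj => hF j (Finset.mem_insert_of_mem hj)),
      ih fun j hj => hF j (Finset.mem_insert_of_mem hj)]

theorem dX_dgamma (hg : ContDiffOn ℝ ∞ g (upperHalfSpace d)) (k : Fin d)
    (hq : q ∈ upperHalfSpace d) :
    dX d k (dgamma d γ g) q = dgamma d γ (dX d k g) q := by
  have hU := isOpen_upperHalfSpace (d := d)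
  have hdiff : ∀ {F : EuclideanSpace ℝ (Fin d) × ℝ → ℝ}, ContDiffOn ℝ ∞ F (upperHalfSpace d) →
      DifferentiableAt ℝ F q := fun hF => hF.differentiableAt_of_isOpen hU hq
  have hD : ∀ w, ContDiffOn ℝ ∞ (dirDeriv w g) (upperHalfSpace d) :=
    fun w => contDiffOn_dirDeriv hg hU
  have hDD : ∀ w, ContDiffOn ℝ ∞ (dirDeriv w (dirDeriv w g)) (upperHalfSpace d) :=
    fun w => contDiffOn_dirDeriv (hD w) hU
  have hγ : DifferentiableAt ℝ (fun t : ℝ => γ / t) q.2 :=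
    (differentiableAt_const γ).div differentiableAt_id hq.ne'
  have hcoef : DifferentiableAt ℝ (fun p : EuclideanSpace ℝ (Fin d) × ℝ => γ / p.2) q :=
    hγ.comp q differentiableAt_snd
  have hcoef_x : dirDeriv (xDir k) (fun p : EuclideanSpace ℝ (Fin d) × ℝ => γ / p.2) q = 0 := by
    rw [dirDeriv_comp_snd hγ, xDir_snd, dirDeriv_zero_left, Pi.zero_apply]
  rw [dX_eq_dirDeriv, show dgamma d γ g = _ from funext (dgamma_apply g), dgamma_apply,
    dirDeriv_add ((DifferentiableAt.fun_sum fun i _ => hdiff (hDD _)).fun_add (hdiff (hDD _)))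
      (hcoef.fun_mul (hdiff (hD _))),
    dirDeriv_add (DifferentiableAt.fun_sum fun i _ => hdiff (hDD _)) (hdiff (hDD _)),
    dirDeriv_sum fun i _ => hdiff (hDD _), dirDeriv_mul hcoef (hdiff (hD _)),
    hcoef_x, zero_mul, zero_add, dirDeriv_comm hg hU hq,
    dirDeriv_comm_dirDeriv_dirDeriv hg hU hq,
    Finset.sum_congr rfl fun i _ => dirDeriv_comm_dirDeriv_dirDeriv hg hU hq]

end HalfSpace

section VectorFields

variable {d : ℕ} {a : EuclideanSpace ℝ (Fin d) → EuclideanSpace ℝ (Fin d)}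

theorem contDiff_dXv (ha : ContDiff ℝ ∞ a) (i : Fin d) : ContDiff ℝ ∞ (dXv d i a) :=
  contDiff_dirDeriv ha

theorem contDiff_vecLapX (ha : ContDiff ℝ ∞ a) : ContDiff ℝ ∞ (vecLapX d a) :=
  ContDiff.sum fun i _ => contDiff_dXv (contDiff_dXv ha i) i

theorem contDiff_iterate_vecLapX (ha : ContDiff ℝ ∞ a) (n : ℕ) :
    ContDiff ℝ ∞ ((vecLapX d)^[n] a) := by
  induction n with
  | zero => exact ha
  | succ n ih => rw [Function.iterate_succ_apply']; exact contDiff_vecLapX ih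

theorem vecLapX_apply_coord (x : EuclideanSpace ℝ (Fin d)) (k : Fin d) :
    vecLapX d a x k = ∑ i, dXv d i (dXv d i a) x k := by
  simp [vecLapX]

theorem dXv_vecLapX (ha : ContDiff ℝ ∞ a) (j : Fin d) :
    dXv d j (vecLapX d a) = vecLapX d (dXv d j a) := by
  ext x : 1
  have hDD : ∀ i, ContDiff ℝ ∞ (dXv d i (dXv d i a)) :=
    fun i => contDiff_dXv (contDiff_dXv ha i) i
  change dirDeriv _ (fun y => ∑ i, dXv d i (dXv d i a) y) x
    = ∑ i, dXv d i (dXv d i (dXv d j a)) x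
  rw [dirDeriv_sum fun i _ => (hDD i).differentiable (by simp) x]
  exact Finset.sum_congr rfl fun i _ =>
    dirDeriv_comm_dirDeriv_dirDeriv ha.contDiffOn isOpen_univ (mem_univ x)

theorem dXv_iterate_vecLapX (ha : ContDiff ℝ ∞ a) (j : Fin d) (n : ℕ) :
    dXv d j ((vecLapX d)^[n] a) = (vecLapX d)^[n] (dXv d j a) := by
  induction n with
  | zero => rfl
  | succ n ih =>
    rw [Function.iterate_succ_apply', Function.iterate_succ_apply',
      dXv_vecLapX (contDiff_iterate_vecLapX ha n), ih]

theorem contDiff_coord_fst (ha : ContDiff ℝ ∞ a) (k : Fin d) :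
    ContDiff ℝ ∞ (fun r : EuclideanSpace ℝ (Fin d) × ℝ => a r.1 k) :=
  ((EuclideanSpace.proj k).contDiff.comp ha).comp contDiff_fst

theorem dirDeriv_coord_fst (ha : ContDiff ℝ ∞ a) (w : EuclideanSpace ℝ (Fin d) × ℝ)
    (k : Fin d) :
    dirDeriv w (fun r : EuclideanSpace ℝ (Fin d) × ℝ => a r.1 k)
      = fun r => dirDeriv w.1 a r.1 k := by
  ext r
  have ha' : DifferentiableAt ℝ a r.1 := ha.differentiable (by simp) r.1
  have hk : DifferentiableAt ℝ (fun x => EuclideanSpace.proj (𝕜 := ℝ) k (a x)) r.1 :=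
    (EuclideanSpace.proj (𝕜 := ℝ) k).differentiableAt.comp r.1 ha'
  change dirDeriv w (fun q => EuclideanSpace.proj (𝕜 := ℝ) k (a q.1)) r
    = EuclideanSpace.proj (𝕜 := ℝ) k (dirDeriv w.1 a r.1)
  rw [dirDeriv_comp_fst hk, dirDeriv_clm_comp _ ha']

theorem dgamma_coord_fst {γ : ℝ} (ha : ContDiff ℝ ∞ a) (k : Fin d)
    (r : EuclideanSpace ℝ (Fin d) × ℝ) :
    dgamma d γ (fun r => a r.1 k) r = vecLapX d a r.1 k := by
  have h1 : ∀ w : EuclideanSpace ℝ (Fin d) × ℝ,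
      dirDeriv w (fun r : EuclideanSpace ℝ (Fin d) × ℝ => a r.1 k)
        = fun r => dirDeriv w.1 a r.1 k :=
    fun w => dirDeriv_coord_fst ha w k
  have h2 : ∀ (w : EuclideanSpace ℝ (Fin d) × ℝ) (v : EuclideanSpace ℝ (Fin d)),
      dirDeriv w (fun r : EuclideanSpace ℝ (Fin d) × ℝ => dirDeriv v a r.1 k)
        = fun r => dirDeriv w.1 (dirDeriv v a) r.1 k :=
    fun w v => dirDeriv_coord_fst (contDiff_dirDeriv ha) w k
  simp [dgamma_apply, h1, h2, vecLapX_apply_coord, dXv_eq_dirDeriv, dirDeriv_zero_left,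
    dirDeriv_const]

end VectorFields

section DotGradX

variable {d : ℕ} {γ : ℝ} {a : EuclideanSpace ℝ (Fin d) → EuclideanSpace ℝ (Fin d)}
  {g h : EuclideanSpace ℝ (Fin d) × ℝ → ℝ} {q : EuclideanSpace ℝ (Fin d) × ℝ}

def dotGradX (d : ℕ) (a : EuclideanSpace ℝ (Fin d) → EuclideanSpace ℝ (Fin d))
    (g : EuclideanSpace ℝ (Fin d) × ℝ → ℝ) : EuclideanSpace ℝ (Fin d) × ℝ → ℝ :=
  fun r => ∑ k, a r.1 k * dX d k g r

theorem contDiffOn_dotGradX (ha : ContDiff ℝ ∞ a) (hg : ContDiffOn ℝ ∞ g (upperHalfSpace d)) :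
    ContDiffOn ℝ ∞ (dotGradX d a g) (upperHalfSpace d) :=
  ContDiffOn.sum fun k _ => (contDiff_coord_fst ha k).contDiffOn.mul (contDiffOn_dX hg k)

theorem dotGradX_congr (hgh : EqOn g h (upperHalfSpace d)) (hq : q ∈ upperHalfSpace d) :
    dotGradX d a g q = dotGradX d a h q := by
  simp only [dotGradX, dX_eq_dirDeriv, eqOn_dirDeriv hgh isOpen_upperHalfSpace hq]

theorem dgamma_dotGradX (ha : ContDiff ℝ ∞ a) (hg : ContDiffOn ℝ ∞ g (upperHalfSpace d))
    (hq : q ∈ upperHalfSpace d) :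
    dgamma d γ (dotGradX d a g) q
      = dotGradX d (vecLapX d a) g q + dotGradX d a (dgamma d γ g) q
        + 2 * ∑ j, dotGradX d (dXv d j a) (dX d j g) q := by
  have hterm : ∀ k, dgamma d γ (fun r => a r.1 k * dX d k g r) q
      = vecLapX d a q.1 k * dX d k g q + a q.1 k * dX d k (dgamma d γ g) q
        + 2 * ∑ j, dXv d j a q.1 k * dX d k (dX d j g) q := by
    intro k
    have hswap : ∀ j, dX d j (dX d k g) q = dX d k (dX d j g) q :=
      fun j => dirDeriv_comm hg isOpen_upperHalfSpace hq
    rw [dgamma_mul (contDiffOn_dX hg k) hq (contDiff_coord_fst ha k).contDiffOn,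
      dgamma_coord_fst ha, dX_dgamma hg k hq]
    simp only [hswap]
    simp only [dX_eq_dirDeriv, dXv_eq_dirDeriv, dirDeriv_coord_fst ha, xDir_fst, ξDir_fst,
      dirDeriv_zero_left, Pi.zero_apply, PiLp.zero_apply, zero_mul, add_zero]
    ring
  change dgamma d γ (fun r => ∑ k, a r.1 k * dX d k g r) q = _
  rw [dgamma_sum (fun k _ => (contDiff_coord_fst ha k).contDiffOn.mul (contDiffOn_dX hg k)) hq]
  simp only [hterm, Finset.sum_add_distrib, dotGradX, ← Finset.mul_sum]
  rw [Finset.sum_comm]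

end DotGradX

theorem sum_pi_fin_succ {α M : Type*} [Fintype α] [AddCommMonoid M] {r : ℕ}
    (F : (Fin (r + 1) → α) → M) :
    ∑ js, F js = ∑ j, ∑ js : Fin r → α, F (Fin.cons j js) := by
  rw [← (Fin.consEquiv fun _ => α).sum_comp, Fintype.sum_prod_type]
  rfl

section IteratedDerivatives

variable {d : ℕ} {γ : ℝ} {g : EuclideanSpace ℝ (Fin d) × ℝ → ℝ}
  {v : EuclideanSpace ℝ (Fin d) → EuclideanSpace ℝ (Fin d)}

theorem dXIter_zero (js : Fin 0 → Fin d) (g : EuclideanSpace ℝ (Fin d) × ℝ → ℝ) :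
    dXIter d js g = g := by
  simp [dXIter]

theorem dXIter_cons {r : ℕ} (j : Fin d) (js : Fin r → Fin d)
    (g : EuclideanSpace ℝ (Fin d) × ℝ → ℝ) :
    dXIter d (Fin.cons j js) g = dX d j (dXIter d js g) := by
  simp [dXIter, List.ofFn_succ]

theorem dXvIter_zero (js : Fin 0 → Fin d)
    (v : EuclideanSpace ℝ (Fin d) → EuclideanSpace ℝ (Fin d)) : dXvIter d js v = v := by
  simp [dXvIter]

theorem dXvIter_cons {r : ℕ} (j : Fin d) (js : Fin r → Fin d)
    (v : EuclideanSpace ℝ (Fin d) → EuclideanSpace ℝ (Fin d)) :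
    dXvIter d (Fin.cons j js) v = dXv d j (dXvIter d js v) := by
  simp [dXvIter, List.ofFn_succ]

theorem contDiffOn_dXIter (hg : ContDiffOn ℝ ∞ g (upperHalfSpace d)) {r : ℕ}
    (js : Fin r → Fin d) : ContDiffOn ℝ ∞ (dXIter d js g) (upperHalfSpace d) := by
  induction r with
  | zero => rwa [dXIter_zero]
  | succ r ih =>
    cases js using Fin.consCases with
    | cons j js => rw [dXIter_cons]; exact contDiffOn_dX (ih js) j

theorem contDiff_dXvIter (hv : ContDiff ℝ ∞ v) {r : ℕ} (js : Fin r → Fin d) :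
    ContDiff ℝ ∞ (dXvIter d js v) := by
  induction r with
  | zero => rwa [dXvIter_zero]
  | succ r ih =>
    cases js using Fin.consCases with
    | cons j js => rw [dXvIter_cons]; exact contDiff_dXv (ih js) j

theorem eqOn_dgamma_dXIter (hg : ContDiffOn ℝ ∞ g (upperHalfSpace d)) {r : ℕ}
    (js : Fin r → Fin d) :
    EqOn (dgamma d γ (dXIter d js g)) (dXIter d js (dgamma d γ g)) (upperHalfSpace d) := by
  induction r with
  | zero => simp only [dXIter_zero]; exact eqOn_refl _ _
  | succ r ih =>
    cases js using Fin.consCases with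
    | cons j js =>
      intro q hq
      rw [dXIter_cons, dXIter_cons, ← dX_dgamma (contDiffOn_dXIter hg js) j hq]
      exact eqOn_dirDeriv (ih js) isOpen_upperHalfSpace hq

end IteratedDerivatives

section MixedTerms

variable {d : ℕ} {γ : ℝ} {v : EuclideanSpace ℝ (Fin d) → EuclideanSpace ℝ (Fin d)}
  {f : EuclideanSpace ℝ (Fin d) × ℝ → ℝ}

def mixedTerm (d : ℕ) (γ : ℝ) (v : EuclideanSpace ℝ (Fin d) → EuclideanSpace ℝ (Fin d))
    (f : EuclideanSpace ℝ (Fin d) × ℝ → ℝ) (r a b : ℕ) : EuclideanSpace ℝ (Fin d) × ℝ → ℝ :=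
  fun q => ∑ js : Fin r → Fin d,
    dotGradX d ((vecLapX d)^[a] (dXvIter d js v)) (dXIter d js ((dgamma d γ)^[b] f)) q

variable (hv : ContDiff ℝ ∞ v) (hf : ContDiffOn ℝ ∞ f (upperHalfSpace d))
include hv hf

theorem contDiffOn_mixedTerm (r a b : ℕ) :
    ContDiffOn ℝ ∞ (mixedTerm d γ v f r a b) (upperHalfSpace d) :=
  ContDiffOn.sum fun js _ => contDiffOn_dotGradX
    (contDiff_iterate_vecLapX (contDiff_dXvIter hv js) a)
    (contDiffOn_dXIter (contDiffOn_iterate_dgamma hf b) js)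

theorem dgamma_mixedTerm (r a b : ℕ) {q : EuclideanSpace ℝ (Fin d) × ℝ}
    (hq : q ∈ upperHalfSpace d) :
    dgamma d γ (mixedTerm d γ v f r a b) q
      = mixedTerm d γ v f r (a + 1) b q + mixedTerm d γ v f r a (b + 1) q
        + 2 * mixedTerm d γ v f (r + 1) a b q := by
  have hA : ∀ js : Fin r → Fin d, ContDiff ℝ ∞ ((vecLapX d)^[a] (dXvIter d js v)) :=
    fun js => contDiff_iterate_vecLapX (contDiff_dXvIter hv js) a
  have hG : ∀ js : Fin r → Fin d,
      ContDiffOn ℝ ∞ (dXIter d js ((dgamma d γ)^[b] f)) (upperHalfSpace d) :=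
    fun js => contDiffOn_dXIter (contDiffOn_iterate_dgamma hf b) js
  rw [show mixedTerm d γ v f r a b = fun q => ∑ js : Fin r → Fin d, _ from rfl,
    dgamma_sum (fun js _ => contDiffOn_dotGradX (hA js) (hG js)) hq]
  simp only [dgamma_dotGradX (hA _) (hG _) hq, Finset.sum_add_distrib, ← Finset.mul_sum]
  congr 2
  · simp only [mixedTerm, Function.iterate_succ_apply']
  · refine Finset.sum_congr rfl fun js _ => dotGradX_congr (fun p hp => ?_) hq
    rw [Function.iterate_succ_apply']
    exact eqOn_dgamma_dXIter (contDiffOn_iterate_dgamma hf b) js hp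
  · rw [mixedTerm, sum_pi_fin_succ, Finset.sum_comm]
    simp only [dXIter_cons, dXvIter_cons, dXv_iterate_vecLapX (contDiff_dXvIter hv _)]

end MixedTerms

theorem add_add_pow_eq_sum {R : Type*} [CommSemiring R] (x y z : R) (m : ℕ) :
    (x + y + z) ^ m = ∑ l₁ ∈ Finset.range (m + 1), ∑ l₂ ∈ Finset.range (m + 1 - l₁),
      x ^ l₁ * y ^ l₂ * z ^ (m - l₁ - l₂)
        * ((m.choose (l₁ + l₂) * (l₁ + l₂).choose l₁ : ℕ) : R) := by
  rw [add_pow, ← Finset.sum_range_diag_flip (m + 1) fun l₁ l₂ =>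
    x ^ l₁ * y ^ l₂ * z ^ (m - l₁ - l₂) * ((m.choose (l₁ + l₂) * (l₁ + l₂).choose l₁ : ℕ) : R)]
  refine Finset.sum_congr rfl fun k _ => ?_
  rw [add_pow, Finset.sum_mul, Finset.sum_mul]
  refine Finset.sum_congr rfl fun l hl => ?_
  have hlk : l + (k - l) = k :=
    Nat.add_sub_cancel' (Nat.lt_succ_iff.mp (Finset.mem_range.mp hl))
  rw [Nat.sub_sub, hlk]
  push_cast
  ring

theorem cast_choose_mul_choose {K : Type*} [Field K] [CharZero K] {m l₁ l₂ : ℕ}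
    (h : l₁ + l₂ ≤ m) :
    ((m.choose (l₁ + l₂) * (l₁ + l₂).choose l₁ : ℕ) : K)
      = m.factorial / (l₁.factorial * l₂.factorial * (m - l₁ - l₂).factorial) := by
  have hk : ((l₁ + l₂).factorial : K) ≠ 0 := Nat.cast_ne_zero.mpr (Nat.factorial_ne_zero _)
  push_cast
  rw [Nat.cast_choose K h, Nat.cast_choose K (Nat.le_add_right l₁ l₂), Nat.add_sub_cancel_left,
    Nat.sub_sub]
  field_simp

section Encoding

open MvPolynomial

variable {d : ℕ} {γ : ℝ} {v : EuclideanSpace ℝ (Fin d) → EuclideanSpace ℝ (Fin d)}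
  {f : EuclideanSpace ℝ (Fin d) × ℝ → ℝ}

def mixedCombination (d : ℕ) (γ : ℝ) (v : EuclideanSpace ℝ (Fin d) → EuclideanSpace ℝ (Fin d))
    (f : EuclideanSpace ℝ (Fin d) × ℝ → ℝ) :
    MvPolynomial (Fin 3) ℝ →ₗ[ℝ] (EuclideanSpace ℝ (Fin d) × ℝ → ℝ) :=
  (basisMonomials (Fin 3) ℝ).constr ℝ fun s => mixedTerm d γ v f (s 0) (s 1) (s 2)

def leibnizSymbol : MvPolynomial (Fin 3) ℝ := X 1 + X 2 + 2 * X 0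

theorem mixedCombination_monomial (s : Fin 3 →₀ ℕ) (c : ℝ) :
    mixedCombination d γ v f (monomial s c) = c • mixedTerm d γ v f (s 0) (s 1) (s 2) := by
  have hs : monomial s c = c • basisMonomials (Fin 3) ℝ s := by simp [smul_monomial]
  rw [hs, map_smul, mixedCombination, Module.Basis.constr_basis]

theorem mixedCombination_X_pow_mul (a b p n : ℕ) :
    mixedCombination d γ v f (X 1 ^ a * X 2 ^ b * (2 * X 0) ^ p * (n : MvPolynomial (Fin 3) ℝ))
      = ((n : ℝ) * 2 ^ p) • mixedTerm d γ v f p a b := by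
  have hmon : X 1 ^ a * X 2 ^ b * (2 * X 0) ^ p * (n : MvPolynomial (Fin 3) ℝ)
      = monomial (Finsupp.single 1 a + Finsupp.single 2 b + Finsupp.single 0 p)
          ((n : ℝ) * 2 ^ p) := by
    rw [monomial_add_single, monomial_add_single, ← C_mul_X_pow_eq_monomial]
    simp only [map_mul, map_natCast, map_pow, map_ofNat]
    ring
  rw [hmon, mixedCombination_monomial]
  simp

theorem mixedCombination_leibnizSymbol_pow (m : ℕ) :
    mixedCombination d γ v f (leibnizSymbol ^ m)
      = ∑ l₁ ∈ Finset.range (m + 1), ∑ l₂ ∈ Finset.range (m + 1 - l₁),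
          (((m.choose (l₁ + l₂) * (l₁ + l₂).choose l₁ : ℕ) : ℝ) * 2 ^ (m - l₁ - l₂))
            • mixedTerm d γ v f (m - l₁ - l₂) l₁ l₂ := by
  simp only [leibnizSymbol, add_add_pow_eq_sum, map_sum, mixedCombination_X_pow_mul]

variable (hv : ContDiff ℝ ∞ v) (hf : ContDiffOn ℝ ∞ f (upperHalfSpace d))
include hv hf

theorem contDiffOn_mixedCombination (P : MvPolynomial (Fin 3) ℝ) :
    ContDiffOn ℝ ∞ (mixedCombination d γ v f P) (upperHalfSpace d) := by
  induction P using MvPolynomial.induction_on' with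
  | monomial s c =>
    rw [mixedCombination_monomial]
    exact (contDiffOn_mixedTerm hv hf _ _ _).const_smul c
  | add P Q hP hQ => rw [map_add]; exact hP.add hQ

theorem dgamma_mixedCombination (P : MvPolynomial (Fin 3) ℝ) :
    EqOn (dgamma d γ (mixedCombination d γ v f P))
      (mixedCombination d γ v f (leibnizSymbol * P)) (upperHalfSpace d) := by
  induction P using MvPolynomial.induction_on' with
  | monomial s c =>
    intro q hq
    have hX : leibnizSymbol * monomial s c = monomial (s + Finsupp.single 1 1) c
        + monomial (s + Finsupp.single 2 1) c
        + (monomial (s + Finsupp.single 0 1) c + monomial (s + Finsupp.single 0 1) c) := by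
      simp only [leibnizSymbol, monomial_add_single, pow_one]
      ring
    rw [mixedCombination_monomial, dgamma_const_smul (contDiffOn_mixedTerm hv hf _ _ _) hq,
      dgamma_mixedTerm hv hf _ _ _ hq, hX]
    simp only [map_add, mixedCombination_monomial, Finsupp.coe_add, Pi.add_apply,
      Finsupp.single_eq_same, ne_eq, Fin.reduceEq, not_false_eq_true, Finsupp.single_eq_of_ne,
      add_zero, Pi.smul_apply, smul_eq_mul]
    ring
  | add P Q hP hQ =>
    intro q hq
    rw [map_add, mul_add, map_add]
    exact (dgamma_add (contDiffOn_mixedCombination hv hf P) hq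
      (contDiffOn_mixedCombination hv hf Q)).trans (by rw [hP hq, hQ hq]; rfl)

theorem iterate_dgamma_mixedCombination_one (m : ℕ) :
    EqOn ((dgamma d γ)^[m] (mixedCombination d γ v f 1))
      (mixedCombination d γ v f (leibnizSymbol ^ m)) (upperHalfSpace d) := by
  induction m with
  | zero => simp only [Function.iterate_zero, id, pow_zero]; exact eqOn_refl _ _
  | succ m ih =>
    intro q hq
    rw [Function.iterate_succ_apply', pow_succ', eqOn_dgamma ih hq]
    exact dgamma_mixedCombination hv hf _ hq

end Encoding

theorem stmt_11_general (d : ℕ) (γ : ℝ) (m : ℕ)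
    (v : EuclideanSpace ℝ (Fin d) → EuclideanSpace ℝ (Fin d))
    (hv : ContDiff ℝ (⊤ : ℕ∞) v)
    (f : EuclideanSpace ℝ (Fin d) × ℝ → ℝ)
    (hf : ContDiffOn ℝ (⊤ : ℕ∞) f {p : EuclideanSpace ℝ (Fin d) × ℝ | 0 < p.2}) :
    ∀ q : EuclideanSpace ℝ (Fin d) × ℝ, 0 < q.2 →
      (dgamma d γ)^[m] (fun r => ∑ k : Fin d, v r.1 k * dX d k f r) q
        = ∑ l₁ ∈ Finset.range (m + 1), ∑ l₂ ∈ Finset.range (m + 1 - l₁),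
            ((m.factorial : ℝ) /
                ((l₁.factorial : ℝ) * (l₂.factorial : ℝ) *
                  ((m - l₁ - l₂).factorial : ℝ))) *
              2 ^ (m - l₁ - l₂) *
              ∑ js : Fin (m - l₁ - l₂) → Fin d, ∑ k : Fin d,
                (vecLapX d)^[l₁] (dXvIter d js v) q.1 k *
                  dX d k (dXIter d js ((dgamma d γ)^[l₂] f)) q := by
  intro q hq
  have hstart : (fun r => ∑ k : Fin d, v r.1 k * dX d k f r) = mixedCombination d γ v f 1 := by
    rw [MvPolynomial.one_def, mixedCombination_monomial, one_smul]
    ext r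
    simp [mixedTerm, dotGradX, dXIter_zero, dXvIter_zero]
  rw [hstart, iterate_dgamma_mixedCombination_one hv hf m hq, mixedCombination_leibnizSymbol_pow]
  simp only [Finset.sum_apply, Pi.smul_apply, smul_eq_mul]
  refine Finset.sum_congr rfl fun l₁ hl₁ => Finset.sum_congr rfl fun l₂ hl₂ => ?_
  rw [Finset.mem_range] at hl₁ hl₂
  rw [cast_choose_mul_choose (by omega)]
  rfl

/-- Iterated Leibniz-type formula: for smooth `v : ℝ^d → ℝ^d` and
`f ∈ C^∞(ℝ^d × (0,∞))`, pointwise on the upper half-space,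
`Δ_γ^m (v·∇_x f) = ∑_{ℓ₁+ℓ₂+p=m} (m!/(ℓ₁!ℓ₂!p!)) 2^p ∑_{j₁,…,j_p}
  (Δ_x^{ℓ₁} ∂_{j₁}⋯∂_{j_p} v) · ∇_x (∂_{j₁}⋯∂_{j_p} Δ_γ^{ℓ₂} f)`. -/
theorem stmt_11 (d : ℕ) (hd : 1 ≤ d) (γ : ℝ) (m : ℕ)
    (v : EuclideanSpace ℝ (Fin d) → EuclideanSpace ℝ (Fin d))
    (hv : ContDiff ℝ (⊤ : ℕ∞) v)
    (f : EuclideanSpace ℝ (Fin d) × ℝ → ℝ)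
    (hf : ContDiffOn ℝ (⊤ : ℕ∞) f {p : EuclideanSpace ℝ (Fin d) × ℝ | 0 < p.2}) :
    ∀ q : EuclideanSpace ℝ (Fin d) × ℝ, 0 < q.2 →
      (dgamma d γ)^[m] (fun r => ∑ k : Fin d, v r.1 k * dX d k f r) q
        = ∑ l₁ ∈ Finset.range (m + 1), ∑ l₂ ∈ Finset.range (m + 1 - l₁),
            ((m.factorial : ℝ) /
                ((l₁.factorial : ℝ) * (l₂.factorial : ℝ) *
                  ((m - l₁ - l₂).factorial : ℝ))) *
              2 ^ (m - l₁ - l₂) *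
              ∑ js : Fin (m - l₁ - l₂) → Fin d, ∑ k : Fin d,
                (vecLapX d)^[l₁] (dXvIter d js v) q.1 k *
                  dX d k (dXIter d js ((dgamma d γ)^[l₂] f)) q :=
  stmt_11_general d γ m v hv f hf
end
end
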